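/- If a finite simple graph G contains the 5-cycle C₅ as an induced subgraph, then E(G) > 2·ch(G). -/

import Mathlib

/-!
Cauchy interlacing gives `λ₂(G) + λ₃(G) ≥ λ₂(C₅) + λ₃(C₅) = 4 cos(2π/5) > 1`. Concretely, `C₅` has a
3-dimensional space of vectors with Rayleigh quotient `≥ 11/20`; extending it by zero shows that `G`
has three eigenvalues `≥ 11/20`. Since the eigenvalues sum to the trace `0`, the energy is twice the
sum of the positive ones, so `E(G) ≥ 2 (λ₁ + 11/10)`. On the other side, the Rayleigh quotient of
the indicator vector of a vertex set bounds the average degree of every induced subgraph by `λ₁`,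
so `G` is `⌊λ₁⌋`-degenerate and greedy list colouring gives `ch(G) ≤ λ₁ + 1`.
-/

open SimpleGraph Matrix Finset

/-- The eigenvalues (unordered, indexed by vertices) of the adjacency matrix of `G` over `ℝ`. -/
noncomputable def adjEigs {V : Type*} [Fintype V] [DecidableEq V] (G : SimpleGraph V) : V → ℝ := by
  classical
  exact (show ((G.adjMatrix ℝ)).IsHermitian from by
    rw [Matrix.IsHermitian, Matrix.conjTranspose_eq_transpose_of_trivial]
    exact G.isSymm_adjMatrix).eigenvalues

/-- The energy of a graph: the sum of the absolute values of its adjacency eigenvalues. -/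
noncomputable def energy {V : Type*} [Fintype V] [DecidableEq V] (G : SimpleGraph V) : ℝ :=
  ∑ i, |adjEigs G i|

/-- The adjacency eigenvalues of `G` sorted in nonincreasing order. -/
noncomputable def eigList {V : Type*} [Fintype V] [DecidableEq V] (G : SimpleGraph V) : List ℝ :=
  (Finset.univ.val.map (adjEigs G)).sort (· ≥ ·)

/-- `eig G i` is the `(i+1)`-st largest adjacency eigenvalue of `G` (0-indexed);
so `eig G 0 = λ₁(G)`, `eig G 1 = λ₂(G)`, etc. -/
noncomputable def eig {V : Type*} [Fintype V] [DecidableEq V] (G : SimpleGraph V) (i : ℕ) : ℝ :=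
  (eigList G).getD i 0

/-- `G` is `k`-choosable: for every assignment of lists of `k` colors to the vertices,
there is a proper coloring choosing each vertex's color from its list. -/
def Choosable {V : Type*} (G : SimpleGraph V) (k : ℕ) : Prop :=
  ∀ L : V → Finset ℕ, (∀ v, (L v).card = k) →
    ∃ c : V → ℕ, (∀ v, c v ∈ L v) ∧ ∀ ⦃u v⦄, G.Adj u v → c u ≠ c v

/-- The choice number (list chromatic number) of `G`. -/
noncomputable def choiceNumber {V : Type*} (G : SimpleGraph V) : ℕ :=
  sInf {k | Choosable G k}

/-- The graph `2K₂`: two disjoint edges on four vertices. -/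
def twoK2 : SimpleGraph (Fin 4) :=
  SimpleGraph.fromRel (fun u v => (u = 0 ∧ v = 1) ∨ (u = 2 ∧ v = 3))

/-- The graph `A_{n,t}`: `K_n` together with a new vertex joined to `t` of its vertices. -/
def Ant (n t : ℕ) : SimpleGraph (Fin (n + 1)) :=
  SimpleGraph.fromRel (fun u v => ((u : ℕ) < n ∧ (v : ℕ) < n) ∨ ((u : ℕ) = n ∧ (v : ℕ) < t))

open Module

namespace Matrix.IsHermitian

variable {n : Type*} [Fintype n] [DecidableEq n] {A : Matrix n n ℝ} (hA : A.IsHermitian)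

noncomputable def eigenCoords : (n → ℝ) ≃ₗ[ℝ] (n → ℝ) :=
  (WithLp.linearEquiv 2 ℝ (n → ℝ)).symm ≪≫ₗ hA.eigenvectorBasis.repr.toLinearEquiv ≪≫ₗ
    WithLp.linearEquiv 2 ℝ (n → ℝ)

lemma eigenCoords_apply (x : n → ℝ) (i : n) :
    hA.eigenCoords x i = ⇑(hA.eigenvectorBasis i) ⬝ᵥ x := by
  simp [eigenCoords, OrthonormalBasis.repr_apply_apply, PiLp.inner_apply, dotProduct, mul_comm]

lemma eigenCoords_mulVec (x : n → ℝ) (i : n) :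
    hA.eigenCoords (A *ᵥ x) i = hA.eigenvalues i * hA.eigenCoords x i := by
  have hsymm : Aᵀ = A := by rw [← conjTranspose_eq_transpose_of_trivial]; exact hA
  rw [eigenCoords_apply, eigenCoords_apply, dotProduct_mulVec, ← mulVec_transpose, hsymm,
    hA.mulVec_eigenvectorBasis, smul_dotProduct, smul_eq_mul]

lemma dotProduct_eigenCoords (x y : n → ℝ) : hA.eigenCoords x ⬝ᵥ hA.eigenCoords y = x ⬝ᵥ y := by
  have := hA.eigenvectorBasis.repr.inner_map_map (WithLp.toLp 2 y) (WithLp.toLp 2 x)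
  rwa [EuclideanSpace.inner_toLp_toLp, EuclideanSpace.inner_eq_star_dotProduct, star_trivial,
    star_trivial] at this

lemma dotProduct_mulVec_eq_sum (x : n → ℝ) :
    x ⬝ᵥ (A *ᵥ x) = ∑ i, hA.eigenvalues i * hA.eigenCoords x i ^ 2 := by
  rw [← dotProduct_eigenCoords hA, dotProduct]
  refine Finset.sum_congr rfl fun i _ => ?_
  rw [eigenCoords_mulVec]; ring

lemma dotProduct_self_eq_sum (x : n → ℝ) : x ⬝ᵥ x = ∑ i, hA.eigenCoords x i ^ 2 := by
  rw [← dotProduct_eigenCoords hA, dotProduct]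
  simp only [sq]

lemma dotProduct_mulVec_le {M : ℝ} (hM : ∀ i, hA.eigenvalues i ≤ M) (x : n → ℝ) :
    x ⬝ᵥ (A *ᵥ x) ≤ M * (x ⬝ᵥ x) := by
  rw [dotProduct_mulVec_eq_sum hA, dotProduct_self_eq_sum hA, Finset.mul_sum]
  gcongr with i
  exact hM i

theorem finrank_le_card_eigenvalues_ge {c : ℝ} (W : Submodule ℝ (n → ℝ))
    (hW : ∀ x ∈ W, c * (x ⬝ᵥ x) ≤ x ⬝ᵥ (A *ᵥ x)) :
    finrank ℝ W ≤ #{i | c ≤ hA.eigenvalues i} := by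
  by_contra! hlt
  let T : Finset n := {i | c ≤ hA.eigenvalues i}
  let P : W →ₗ[ℝ] (T → ℝ) :=
    LinearMap.funLeft ℝ ℝ (Subtype.val : T → n) ∘ₗ hA.eigenCoords.toLinearMap ∘ₗ W.subtype
  have hker : LinearMap.ker P ≠ ⊥ :=
    LinearMap.ker_ne_bot_of_finrank_lt (by rwa [finrank_fintype_fun_eq_card, Fintype.card_coe])
  obtain ⟨⟨x, hxW⟩, hxP, hx0⟩ := (Submodule.ne_bot_iff _).mp hker
  have hT : ∀ i ∈ T, hA.eigenCoords x i = 0 := fun i hi => congrFun hxP ⟨i, hi⟩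
  obtain ⟨i₀, hi₀⟩ : ∃ i, hA.eigenCoords x i ≠ 0 :=
    Function.ne_iff.mp ((LinearEquiv.map_ne_zero_iff _).mpr (by simpa using hx0))
  have hQ : x ⬝ᵥ (A *ᵥ x) < c * (x ⬝ᵥ x) := by
    rw [dotProduct_mulVec_eq_sum hA, dotProduct_self_eq_sum hA, Finset.mul_sum]
    refine Finset.sum_lt_sum (fun i _ => ?_) ⟨i₀, mem_univ _, ?_⟩
    · by_cases hi : i ∈ T
      · simp [hT i hi]
      · exact mul_le_mul_of_nonneg_right (by simpa [T] using hi : hA.eigenvalues i < c).le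
          (sq_nonneg _)
    · have : hA.eigenvalues i₀ < c := by
        by_contra! h
        exact hi₀ (hT i₀ (by simpa [T] using h))
      exact mul_lt_mul_of_pos_right this (by positivity)
  exact (hW x hxW).not_gt hQ

theorem exists_finrank_eq_card_eigenvalues_ge (c : ℝ) :
    ∃ W : Submodule ℝ (n → ℝ), finrank ℝ W = #{i | c ≤ hA.eigenvalues i} ∧
      ∀ x ∈ W, c * (x ⬝ᵥ x) ≤ x ⬝ᵥ (A *ᵥ x) := by
  let T : Finset n := {i | c ≤ hA.eigenvalues i}
  let Φ : (T → ℝ) →ₗ[ℝ] (n → ℝ) :=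
    hA.eigenCoords.symm.toLinearMap ∘ₗ Function.ExtendByZero.linearMap ℝ Subtype.val
  have hΦ : Function.Injective Φ :=
    hA.eigenCoords.symm.injective.comp (Function.extend_injective Subtype.val_injective (0 : n → ℝ))
  refine ⟨LinearMap.range Φ, by
    rw [LinearMap.finrank_range_of_inj hΦ, finrank_fintype_fun_eq_card, Fintype.card_coe], ?_⟩
  rintro _ ⟨y, rfl⟩
  have hcoords : hA.eigenCoords (Φ y) = Function.extend Subtype.val y 0 := by
    simp only [Φ, LinearMap.comp_apply, LinearEquiv.coe_coe, LinearEquiv.apply_symm_apply]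
    rfl
  rw [dotProduct_mulVec_eq_sum hA, dotProduct_self_eq_sum hA, Finset.mul_sum, hcoords]
  refine Finset.sum_le_sum fun i _ => ?_
  by_cases hi : i ∈ T
  · exact mul_le_mul_of_nonneg_right (Finset.mem_filter.mp hi).2 (sq_nonneg _)
  · simp [Function.extend_apply' _ _ i fun ⟨j, hj⟩ => hi (hj ▸ (j : T).2)]

end Matrix.IsHermitian

lemma Function.Injective.sum_extend_zero_mul {ι κ : Type*} [Fintype ι] [Fintype κ] {f : ι → κ}
    (hf : Function.Injective f) (z : ι → ℝ) (g : κ → ℝ) :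
    ∑ v, Function.extend f z 0 v * g v = ∑ i, z i * g (f i) := by
  classical
  calc ∑ v, Function.extend f z 0 v * g v
      = ∑ v ∈ univ.map ⟨f, hf⟩, Function.extend f z 0 v * g v := by
        refine (sum_subset (subset_univ _) fun v _ hv => ?_).symm
        rw [Function.extend_apply' _ _ _ (by simpa using hv), Pi.zero_apply, zero_mul]
    _ = ∑ i, z i * g (f i) := by simp [hf.extend_apply]

lemma Function.Injective.extend_zero_dotProduct {ι κ : Type*} [Fintype ι] [Fintype κ] {f : ι → κ}
    (hf : Function.Injective f) (z w : ι → ℝ) :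
    Function.extend f z 0 ⬝ᵥ Function.extend f w 0 = z ⬝ᵥ w := by
  simp only [dotProduct, hf.sum_extend_zero_mul, hf.extend_apply]

namespace SimpleGraph

lemma adjEigs_eq {V : Type*} [Fintype V] [DecidableEq V] (G : SimpleGraph V) [DecidableRel G.Adj] :
    adjEigs G = (G.isHermitian_adjMatrix ℝ).eigenvalues := by
  unfold adjEigs
  congr!

namespace Embedding

variable {V W : Type*} [Fintype V] [Fintype W] {G : SimpleGraph V} {H : SimpleGraph W}
  [DecidableRel G.Adj] [DecidableRel H.Adj]

lemma adjMatrix_mulVec_extend_apply (f : H ↪g G) (z : W → ℝ) (i : W) :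
    (G.adjMatrix ℝ *ᵥ Function.extend f z 0) (f i) = (H.adjMatrix ℝ *ᵥ z) i := by
  rw [mulVec, dotProduct_comm, dotProduct, f.injective.sum_extend_zero_mul, mulVec,
    dotProduct_comm, dotProduct]
  simp only [adjMatrix_apply, f.map_adj_iff]

lemma extend_dotProduct_adjMatrix_mulVec (f : H ↪g G) (z : W → ℝ) :
    Function.extend f z 0 ⬝ᵥ (G.adjMatrix ℝ *ᵥ Function.extend f z 0) =
      z ⬝ᵥ (H.adjMatrix ℝ *ᵥ z) := by
  simp only [dotProduct, f.injective.sum_extend_zero_mul, adjMatrix_mulVec_extend_apply]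

omit [DecidableRel G.Adj] [DecidableRel H.Adj] in
theorem card_adjEigs_ge_le [DecidableEq V] [DecidableEq W] (f : H ↪g G) (c : ℝ) :
    #{i | c ≤ adjEigs H i} ≤ #{v | c ≤ adjEigs G v} := by
  classical
  obtain ⟨U, hU, hray⟩ := (H.isHermitian_adjMatrix ℝ).exists_finrank_eq_card_eigenvalues_ge c
  let e := Function.ExtendByZero.linearMap ℝ f
  have he : Function.Injective e := Function.extend_injective f.injective (0 : V → ℝ)
  rw [adjEigs_eq, adjEigs_eq, ← hU, (Submodule.equivMapOfInjective e he U).finrank_eq]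
  refine (G.isHermitian_adjMatrix ℝ).finrank_le_card_eigenvalues_ge _ ?_
  rintro _ ⟨z, hz, rfl⟩
  have := hray z hz
  rwa [← f.injective.extend_zero_dotProduct, ← f.extend_dotProduct_adjMatrix_mulVec] at this

end Embedding

section Degenerate

variable {V : Type*} (G : SimpleGraph V) [DecidableRel G.Adj]

def IsDegenerate (k : ℕ) : Prop :=
  ∀ S : Finset V, S.Nonempty → ∃ v ∈ S, #{w ∈ S | G.Adj v w} ≤ k

variable {G}

theorem IsDegenerate.choosable_succ [Fintype V] [DecidableEq V] {k : ℕ} (hG : G.IsDegenerate k) :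
    Choosable G (k + 1) := by
  intro L hL
  suffices ∀ S : Finset V, ∃ c : V → ℕ,
      (∀ v ∈ S, c v ∈ L v) ∧ ∀ u ∈ S, ∀ w ∈ S, G.Adj u w → c u ≠ c w by
    obtain ⟨c, hcL, hc⟩ := this univ
    exact ⟨c, fun v => hcL v (mem_univ v), fun u w h => hc u (mem_univ u) w (mem_univ w) h⟩
  intro S
  induction S using Finset.strongInduction with | H S ih =>
  rcases S.eq_empty_or_nonempty with rfl | hS
  · exact ⟨0, by simp, by simp⟩
  obtain ⟨v, hvS, hv⟩ := hG S hS
  obtain ⟨c, hcL, hc⟩ := ih (S.erase v) (erase_ssubset hvS)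
  obtain ⟨a, haL, ha⟩ : ∃ a ∈ L v, a ∉ image c {w ∈ S | G.Adj v w} :=
    exists_mem_notMem_of_card_lt_card (card_image_le.trans_lt (hL v ▸ Nat.lt_succ_of_le hv))
  have hav : ∀ w ∈ S, G.Adj v w → a ≠ c w := fun w hw hvw h =>
    ha (mem_image.2 ⟨w, mem_filter.2 ⟨hw, hvw⟩, h.symm⟩)
  refine ⟨Function.update c v a, fun u hu => ?_, fun u hu w hw huw => ?_⟩
  · rcases eq_or_ne u v with huv | huv
    · simpa [huv] using haL
    · simpa [huv] using hcL u (mem_erase.2 ⟨huv, hu⟩)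
  · simp only [Function.update_apply]
    split_ifs with huv hwv hwv
    · exact (G.irrefl (huv ▸ hwv ▸ huw)).elim
    · exact hav w hw (huv ▸ huw)
    · exact (hav u hu (hwv ▸ huw.symm)).symm
    · exact hc u (mem_erase.2 ⟨huv, hu⟩) w (mem_erase.2 ⟨hwv, hw⟩) huw

theorem isDegenerate_floor_of_eigenvalues_le [Fintype V] [DecidableEq V] {M : ℝ}
    (hM : ∀ v, (G.isHermitian_adjMatrix ℝ).eigenvalues v ≤ M) : G.IsDegenerate ⌊M⌋₊ := by
  intro S hS
  let x : V → ℝ := fun v => if v ∈ S then 1 else 0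
  have hxx : x ⬝ᵥ x = #S := by
    simp [x, dotProduct]
  have hxAx : x ⬝ᵥ (G.adjMatrix ℝ *ᵥ x) = ∑ v ∈ S, (#{w ∈ S | G.Adj v w} : ℝ) := by
    simp [x, dotProduct, mulVec, adjMatrix_apply]
  obtain ⟨v, hvS, hv⟩ := exists_le_of_sum_le hS <| calc
    ∑ v ∈ S, (#{w ∈ S | G.Adj v w} : ℝ) = x ⬝ᵥ (G.adjMatrix ℝ *ᵥ x) := hxAx.symm
    _ ≤ M * (x ⬝ᵥ x) := (G.isHermitian_adjMatrix ℝ).dotProduct_mulVec_le hM x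
    _ = ∑ _v ∈ S, M := by rw [hxx, sum_const, nsmul_eq_mul, mul_comm]
  exact ⟨v, hvS, Nat.le_floor hv⟩

end Degenerate

theorem choiceNumber_le_add_one {V : Type*} [Fintype V] [DecidableEq V] {G : SimpleGraph V}
    {M : ℝ} (hM₀ : 0 ≤ M) (hM : ∀ v, adjEigs G v ≤ M) : (choiceNumber G : ℝ) ≤ M + 1 := by
  classical
  rw [adjEigs_eq] at hM
  have : choiceNumber G ≤ ⌊M⌋₊ + 1 :=
    Nat.sInf_le (show Choosable G _ from (isDegenerate_floor_of_eigenvalues_le hM).choosable_succ)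
  calc (choiceNumber G : ℝ) ≤ ⌊M⌋₊ + 1 := by exact_mod_cast this
    _ ≤ M + 1 := by gcongr; exact Nat.floor_le hM₀

theorem two_mul_sum_adjEigs_le_energy {V : Type*} [Fintype V] [DecidableEq V] (G : SimpleGraph V)
    (s : Finset V) : 2 * ∑ v ∈ s, adjEigs G v ≤ energy G := by
  classical
  have htrace : ∑ v, adjEigs G v = 0 := by
    simpa [adjEigs_eq] using ((G.isHermitian_adjMatrix ℝ).trace_eq_sum_eigenvalues).symm.trans
      (G.trace_adjMatrix ℝ)
  calc 2 * ∑ v ∈ s, adjEigs G v = ∑ v ∈ s, (adjEigs G v + adjEigs G v) := by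
        rw [sum_add_distrib, two_mul]
    _ ≤ ∑ v ∈ s, (|adjEigs G v| + adjEigs G v) := by gcongr; exact le_abs_self _
    _ ≤ ∑ v, (|adjEigs G v| + adjEigs G v) :=
        sum_le_sum_of_subset_of_nonneg (subset_univ s) fun v _ _ => by
          linarith [neg_abs_le (adjEigs G v)]
    _ = energy G := by rw [sum_add_distrib, htrace, add_zero, energy]

lemma dotProduct_adjMatrix_cycleGraph_five_mulVec (z : Fin 5 → ℝ) :
    z ⬝ᵥ (adjMatrix ℝ (cycleGraph 5) *ᵥ z) =
      2 * (z 0 * z 1 + z 1 * z 2 + z 2 * z 3 + z 3 * z 4 + z 4 * z 0) := by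
  simp +decide only [dotProduct, mulVec, Fin.sum_univ_five, adjMatrix_apply,
    cycleGraph_adj, if_true, if_false]
  ring

-- The columns approximate eigenvectors of `C₅` for the eigenvalues `2` and `2 cos(2π/5) ≈ 0.618`:
-- `16 cos(2πk/5)` and `5.3 sin(2πk/5)`, rounded.
theorem three_le_card_adjEigs_cycleGraph_five :
    3 ≤ #{i | (11 / 20 : ℝ) ≤ adjEigs (cycleGraph 5) i} := by
  let P : Matrix (Fin 5) (Fin 3) ℝ := !![1, 16, 0; 1, 5, 5; 1, -13, 3; 1, -13, -3; 1, 5, -5]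
  have hP : Function.Injective P.mulVecLin := by
    rw [← LinearMap.ker_eq_bot, LinearMap.ker_eq_bot']
    intro a ha
    have h₀ := congrFun ha 0
    have h₁ := congrFun ha 1
    have h₂ := congrFun ha 2
    simp [P, mulVec, dotProduct, Fin.sum_univ_three] at h₀ h₁ h₂
    funext i
    fin_cases i <;> simp <;> linarith
  rw [adjEigs_eq]
  calc 3 = finrank ℝ (LinearMap.range P.mulVecLin) := by
        rw [LinearMap.finrank_range_of_inj hP, finrank_fin_fun]
    _ ≤ _ := (isHermitian_adjMatrix ℝ (cycleGraph 5)).finrank_le_card_eigenvalues_ge _ ?_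
  rintro _ ⟨a, rfl⟩
  rw [dotProduct_adjMatrix_cycleGraph_five_mulVec]
  simp [P, mulVec, dotProduct, Fin.sum_univ_three, Fin.sum_univ_five]
  nlinarith [sq_nonneg (a 0), sq_nonneg (a 1), sq_nonneg (a 2)]

end SimpleGraph

/-- If `G` contains an induced `C₅`, then `E(G) > 2 ch(G)`. -/
theorem stmt16 {V : Type*} [Fintype V] [DecidableEq V] (G : SimpleGraph V)
    (f : SimpleGraph.cycleGraph 5 ↪g G) : energy G > 2 * (choiceNumber G : ℝ) := by
  obtain ⟨v₀, -, hv₀⟩ := univ.exists_max_image (adjEigs G) ⟨f 0, mem_univ _⟩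
  set T : Finset V := {v | (11 / 20 : ℝ) ≤ adjEigs G v}
  have hT : 3 ≤ #T := three_le_card_adjEigs_cycleGraph_five.trans (f.card_adjEigs_ge_le _)
  have hv₀T : v₀ ∈ T := by
    obtain ⟨v, hv⟩ := card_pos.1 (by omega : 0 < #T)
    exact mem_filter.2 ⟨mem_univ _, (mem_filter.1 hv).2.trans (hv₀ v (mem_univ v))⟩
  have hch : (choiceNumber G : ℝ) ≤ adjEigs G v₀ + 1 :=
    choiceNumber_le_add_one (by linarith [(mem_filter.1 hv₀T).2]) fun v => hv₀ v (mem_univ v)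
  have hrest : 2 * (11 / 20) ≤ ∑ v ∈ T.erase v₀, adjEigs G v := calc
    2 * (11 / 20 : ℝ) ≤ #(T.erase v₀) • (11 / 20 : ℝ) := by
      rw [nsmul_eq_mul, card_erase_of_mem hv₀T]
      gcongr
      exact_mod_cast (by omega : 2 ≤ #T - 1)
    _ ≤ _ := card_nsmul_le_sum _ _ _ fun v hv => (mem_filter.1 (mem_of_mem_erase hv)).2
  have hE := two_mul_sum_adjEigs_le_energy G T
  rw [← add_sum_erase T _ hv₀T] at hE
  linarith
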